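/- Let $\sigma \geq 0$, $\theta \in [0,1]$, and $\eta_1, \eta_2 \in \mathbb{R}$. Then $e^{\sigma(|\eta_1| + |\eta_2|)} - e^{\sigma|\eta_1 + \eta_2|} \leq \left(2\sigma \min(|\eta_1|, |\eta_2|)\right)^{\theta} e^{\sigma(|\eta_1| + |\eta_2|)}$. -/

import Mathlib

/-!
Write `A = σ (|η₁| + |η₂|)` and `B = σ |η₁ + η₂|`. By the reverse triangle inequality
`0 ≤ A - B ≤ 2σ min(|η₁|, |η₂|)`. Since `e^{B - A} ≥ max(0, 1 - (A - B))`, we get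
`e^A - e^B ≤ min(1, A - B) e^A`, and `min(1, t) ≤ t^θ` for `t ≥ 0`, `θ ∈ [0, 1]`.
-/

open Real

lemma abs_add_abs_sub_abs_add_le_two_mul_min (a b : ℝ) :
    |a| + |b| - |a + b| ≤ 2 * min |a| |b| := by
  have ha : |b| ≤ |a + b| + |a| := by simpa using abs_sub (a + b) a
  have hb : |a| ≤ |a + b| + |b| := by simpa using abs_sub (a + b) b
  rcases le_total |a| |b| with h | h
  · rw [min_eq_left h]; linarith
  · rw [min_eq_right h]; linarith

lemma Real.exp_sub_exp_le_min_one_mul (A B : ℝ) :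
    exp A - exp B ≤ min 1 (A - B) * exp A := by
  have hsplit : exp B = exp (B - A) * exp A := by rw [← exp_add, sub_add_cancel]
  have hlin : 1 + (B - A) ≤ exp (B - A) := by linarith [add_one_le_exp (B - A)]
  have hpos := exp_pos A
  rcases min_cases 1 (A - B) with ⟨he, -⟩ | ⟨he, -⟩ <;> rw [he, hsplit]
  · nlinarith [exp_pos (B - A)]
  · nlinarith

lemma Real.min_one_le_rpow {t θ : ℝ} (ht : 0 ≤ t) (hθ₀ : 0 ≤ θ) (hθ₁ : θ ≤ 1) :
    min 1 t ≤ t ^ θ := by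
  rcases le_total t 1 with h | h
  · rw [min_eq_right h]
    simpa using rpow_le_rpow_of_exponent_ge' ht h hθ₀ hθ₁
  · rw [min_eq_left h]
    simpa using rpow_le_rpow zero_le_one h hθ₀

lemma Real.exp_sub_exp_le_rpow_mul {A B d θ : ℝ} (hBA : B ≤ A) (hd : A - B ≤ d)
    (hθ₀ : 0 ≤ θ) (hθ₁ : θ ≤ 1) :
    exp A - exp B ≤ d ^ θ * exp A := by
  have hAB : 0 ≤ A - B := sub_nonneg.mpr hBA
  calc exp A - exp B ≤ min 1 (A - B) * exp A := exp_sub_exp_le_min_one_mul A B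
    _ ≤ (A - B) ^ θ * exp A := by gcongr; exact min_one_le_rpow hAB hθ₀ hθ₁
    _ ≤ d ^ θ * exp A := by gcongr

theorem exp_weight_diff_two (σ θ η₁ η₂ : ℝ) (hσ : 0 ≤ σ) (hθ₀ : 0 ≤ θ) (hθ₁ : θ ≤ 1) :
    Real.exp (σ * (|η₁| + |η₂|)) - Real.exp (σ * |η₁ + η₂|) ≤
      (2 * σ * min |η₁| |η₂|) ^ θ * Real.exp (σ * (|η₁| + |η₂|)) := by
  have hweights : σ * |η₁ + η₂| ≤ σ * (|η₁| + |η₂|) :=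
    mul_le_mul_of_nonneg_left (abs_add_le η₁ η₂) hσ
  have hgap : σ * (|η₁| + |η₂|) - σ * |η₁ + η₂| ≤ 2 * σ * min |η₁| |η₂| := by
    have := mul_le_mul_of_nonneg_left (abs_add_abs_sub_abs_add_le_two_mul_min η₁ η₂) hσ
    linarith
  exact exp_sub_exp_le_rpow_mul hweights hgap hθ₀ hθ₁
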